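/- arXiv:1712.02919 — 4 statements merged into one kernel-verified Lean document; each statement's English description precedes it below -/
import Mathlib

section
/- Analytical solution to the knapsack problem: suppose σ̄ ∈ ℝ^n with σ̄ > 0 and τ̄ ≥ 0 are such that ρ̄ defined by ρ̄ₑ = (1/2)(σ̄ₑ - τ̄vₑ + wₑ)/σ̄ₑ satisfies ρ̄ ∈ {0,1}^n and τ̄(vᵀρ̄ - V_c) = 0 and vᵀρ̄ ≤ V_c. Then ρ̄ is a global minimizer of P_u(ρ) = -wᵀρ over the feasible set {ρ ∈ {0,1}^n : vᵀρ ≤ V_c}. -/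
/-!
Lagrangian duality. With multipliers `σ̄` for the binary constraints `ρₑ² - ρₑ = 0` and `τ̄ ≥ 0`
for the capacity constraint, the Lagrangian `Ξ(·, σ̄, τ̄)` is a separable convex quadratic whose
stationary point is exactly `ρ̄`. It underestimates `-wᵀρ` on the feasible set and equals `-wᵀρ̄`
at `ρ̄` by complementary slackness, so `-wᵀρ̄ = Ξ(ρ̄) ≤ Ξ(ρ) ≤ -wᵀρ` for every feasible `ρ`.
-/

open Finset

namespace Knapsack

variable {ι : Type*} [Fintype ι]

def lagrangian (w v σ : ι → ℝ) (τ Vc : ℝ) (ρ : ι → ℝ) : ℝ :=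
  ∑ e, σ e * (ρ e ^ 2 - ρ e) - ∑ e, w e * ρ e + τ * (∑ e, v e * ρ e - Vc)

section

variable (w v σ : ι → ℝ) (τ Vc : ℝ)

theorem lagrangian_eq_sum (ρ : ι → ℝ) :
    lagrangian w v σ τ Vc ρ =
      ∑ e, (σ e * (ρ e ^ 2 - ρ e) - w e * ρ e + τ * v e * ρ e) - τ * Vc := by
  simp only [lagrangian, sum_add_distrib, sum_sub_distrib, mul_sub, mul_sum, mul_assoc]
  ring

theorem lagrangian_of_binary {ρ : ι → ℝ} (hρ : ∀ e, ρ e = 0 ∨ ρ e = 1) :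
    lagrangian w v σ τ Vc ρ = -∑ e, w e * ρ e + τ * (∑ e, v e * ρ e - Vc) := by
  have hquad : ∀ e, ρ e ^ 2 - ρ e = 0 := fun e => by
    rcases hρ e with h | h <;> simp [h]
  simp [lagrangian, hquad, sub_eq_add_neg]

theorem lagrangian_le_of_feasible {ρ : ι → ℝ} (hτ : 0 ≤ τ) (hρ : ∀ e, ρ e = 0 ∨ ρ e = 1)
    (hfeas : ∑ e, v e * ρ e ≤ Vc) :
    lagrangian w v σ τ Vc ρ ≤ -∑ e, w e * ρ e := by
  rw [lagrangian_of_binary w v σ τ Vc hρ]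
  nlinarith

/-- Each summand of `lagrangian_eq_sum` exceeds its value at the vertex `ρ̄ₑ` by `σₑ (ρₑ - ρ̄ₑ)²`. -/
theorem lagrangian_le_of_stationary {ρBar : ι → ℝ} (hσ : ∀ e, 0 ≤ σ e)
    (hstat : ∀ e, 2 * σ e * ρBar e = σ e - τ * v e + w e) (ρ : ι → ℝ) :
    lagrangian w v σ τ Vc ρBar ≤ lagrangian w v σ τ Vc ρ := by
  rw [lagrangian_eq_sum, lagrangian_eq_sum]
  refine sub_le_sub_right (sum_le_sum fun e _ => ?_) _
  have hgap : (σ e * (ρ e ^ 2 - ρ e) - w e * ρ e + τ * v e * ρ e) -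
      (σ e * (ρBar e ^ 2 - ρBar e) - w e * ρBar e + τ * v e * ρBar e) =
      σ e * (ρ e - ρBar e) ^ 2 := by
    linear_combination (ρ e - ρBar e) * hstat e
  nlinarith [mul_nonneg (hσ e) (sq_nonneg (ρ e - ρBar e))]

end

end Knapsack

open Knapsack in
theorem stmt_10_general (n : ℕ) (w v : Fin n → ℝ) (Vc : ℝ) (σBar : Fin n → ℝ) (τBar : ℝ)
    (hσ : ∀ e, 0 < σBar e) (hτ : 0 ≤ τBar)
    (ρBar : Fin n → ℝ)
    (hρdef : ∀ e, ρBar e = (1 / 2) * (σBar e - τBar * v e + w e) / σBar e)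
    (hbin : ∀ e, ρBar e = 0 ∨ ρBar e = 1)
    (hcomp : τBar * ((∑ e, v e * ρBar e) - Vc) = 0) :
    ∀ ρ : Fin n → ℝ, (∀ e, ρ e = 0 ∨ ρ e = 1) → (∑ e, v e * ρ e) ≤ Vc →
      -(∑ e, w e * ρBar e) ≤ -(∑ e, w e * ρ e) := by
  intro ρ hρ hρfeas
  have hstat : ∀ e, 2 * σBar e * ρBar e = σBar e - τBar * v e + w e := fun e => by
    rw [hρdef e]
    field_simp [(hσ e).ne']
  calc -(∑ e, w e * ρBar e)
      = lagrangian w v σBar τBar Vc ρBar := by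
        rw [lagrangian_of_binary w v σBar τBar Vc hbin, hcomp, add_zero]
    _ ≤ lagrangian w v σBar τBar Vc ρ :=
        lagrangian_le_of_stationary w v σBar τBar Vc (fun e => (hσ e).le) hstat ρ
    _ ≤ -(∑ e, w e * ρ e) := lagrangian_le_of_feasible w v σBar τBar Vc hτ hρ hρfeas

/-- Analytical solution to the knapsack problem: if `σ̄ > 0`, `τ̄ ≥ 0`,
`ρ̄ₑ = (σ̄ₑ - τ̄vₑ + wₑ)/(2σ̄ₑ) ∈ {0,1}`, `τ̄(vᵀρ̄ - V_c) = 0` and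
`vᵀρ̄ ≤ V_c`, then `ρ̄` globally minimizes `P_u(ρ) = -wᵀρ` over
`{ρ ∈ {0,1}^n : vᵀρ ≤ V_c}`. -/
theorem stmt_10 (n : ℕ) (w v : Fin n → ℝ) (Vc : ℝ) (hv : ∀ e, 0 < v e)
    (hVc : 0 < Vc) (σBar : Fin n → ℝ) (τBar : ℝ)
    (hσ : ∀ e, 0 < σBar e) (hτ : 0 ≤ τBar)
    (ρBar : Fin n → ℝ)
    (hρdef : ∀ e, ρBar e = (1 / 2) * (σBar e - τBar * v e + w e) / σBar e)
    (hbin : ∀ e, ρBar e = 0 ∨ ρBar e = 1)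
    (hcomp : τBar * ((∑ e, v e * ρBar e) - Vc) = 0)
    (hfeas : (∑ e, v e * ρBar e) ≤ Vc) :
    ∀ ρ : Fin n → ℝ, (∀ e, ρ e = 0 ∨ ρ e = 1) → (∑ e, v e * ρ e) ≤ Vc →
      -(∑ e, w e * ρBar e) ≤ -(∑ e, w e * ρ e) :=
  stmt_10_general n w v Vc σBar τBar hσ hτ ρBar hρdef hbin hcomp
end

section
/- Weak duality for the canonical dual: for every feasible ρ ∈ {0,1}^n with vᵀρ ≤ V_c and every (σ, τ) with σ > 0 and τ ≥ 0, one has -wᵀρ ≥ -(1/4) Σₑ (σₑ - τvₑ + wₑ)² σₑ⁻¹ - τ V_c. -/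
/-!
Relax the Boolean constraint `ρₑ ∈ {0,1}` to the identity `ρₑ² = ρₑ` and dualize with multipliers
`σₑ` and `τ`: since `τ (vᵀρ - V_c) ≤ 0` and `σₑ(ρₑ² - ρₑ) = 0`, the primal objective `-wᵀρ` dominates
the Lagrangian `Σₑ σₑ(ρₑ² - ρₑ) - wᵀρ + τ(vᵀρ - V_c)`. For `σ > 0` this is a separable convex
quadratic in `ρ`, whose minimum over all of `ℝⁿ`, obtained by completing the square, is the dual value.
-/

open Finset

lemma neg_quarter_sq_mul_inv_le {a : ℝ} (ha : 0 < a) (b x : ℝ) :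
    -(1 / 4) * (b ^ 2 * a⁻¹) ≤ a * x ^ 2 - b * x := by
  have hsq : 0 ≤ (2 * a * x - b) ^ 2 * a⁻¹ := by positivity
  have hexpand : (2 * a * x - b) ^ 2 * a⁻¹ = 4 * (a * x ^ 2 - b * x) + b ^ 2 * a⁻¹ := by
    field_simp
    ring
  linarith

lemma neg_quarter_sum_sq_mul_inv_le {ι : Type*} [Fintype ι] {σ : ι → ℝ} (hσ : ∀ e, 0 < σ e)
    (b ρ : ι → ℝ) :
    -(1 / 4) * ∑ e, b e ^ 2 * (σ e)⁻¹ ≤ ∑ e, (σ e * ρ e ^ 2 - b e * ρ e) := by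
  rw [mul_sum]
  exact sum_le_sum fun e _ => neg_quarter_sq_mul_inv_le (hσ e) (b e) (ρ e)

theorem stmt_11_general (n : ℕ) (w v : Fin n → ℝ) (Vc : ℝ) :
    ∀ ρ : Fin n → ℝ, (∀ e, ρ e = 0 ∨ ρ e = 1) → (∑ e, v e * ρ e) ≤ Vc →
    ∀ σ : Fin n → ℝ, ∀ τ : ℝ, (∀ e, 0 < σ e) → 0 ≤ τ →
      -(1 / 4) * (∑ e, (σ e - τ * v e + w e) ^ 2 * (σ e)⁻¹) - τ * Vc
        ≤ -(∑ e, w e * ρ e) := by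
  intro ρ hρ hfeas σ τ hσ hτ
  have hidem : ∀ e, ρ e ^ 2 = ρ e := fun e => by rcases hρ e with h | h <;> simp [h]
  have hlagrangian : ∑ e, (σ e * ρ e ^ 2 - (σ e - τ * v e + w e) * ρ e)
      = τ * ∑ e, v e * ρ e - ∑ e, w e * ρ e := by
    simp only [hidem, mul_sum, ← sum_sub_distrib]
    exact sum_congr rfl fun e _ => by ring
  have hdual := neg_quarter_sum_sq_mul_inv_le hσ (fun e => σ e - τ * v e + w e) ρ
  have hpenalty : τ * ∑ e, v e * ρ e ≤ τ * Vc := mul_le_mul_of_nonneg_left hfeas hτ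
  linarith

/-- Weak duality: for every feasible `ρ ∈ {0,1}^n` with `vᵀρ ≤ V_c` and every
`(σ,τ)` with `σ > 0`, `τ ≥ 0`, one has `P_u(ρ) ≥ P^d_u(σ,τ)`. -/
theorem stmt_11 (n : ℕ) (w v : Fin n → ℝ) (Vc : ℝ) (hv : ∀ e, 0 < v e)
    (hVc : 0 < Vc) :
    ∀ ρ : Fin n → ℝ, (∀ e, ρ e = 0 ∨ ρ e = 1) → (∑ e, v e * ρ e) ≤ Vc →
    ∀ σ : Fin n → ℝ, ∀ τ : ℝ, (∀ e, 0 < σ e) → 0 ≤ τ →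
      -(1 / 4) * (∑ e, (σ e - τ * v e + w e) ^ 2 * (σ e)⁻¹) - τ * Vc
        ≤ -(∑ e, w e * ρ e) :=
  stmt_11_general n w v Vc
end

section
/- For the one-dimensional double-well function Π(x) = (1/2)β(x²/2 - λ)² - f x with β, λ > 0 and f ≠ 0, every critical point x̄ (solution of β(x̄²/2 - λ)x̄ = f) satisfies x̄ ≠ 0, and with ς̄ = β(x̄²/2 - λ) = f/x̄, one has the complementary-dual equality Π(x̄) = Π^d(ς̄) where Π^d(ς) = -f²/(2ς) - ς²/(2β) - λς. -/
noncomputable section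

def doubleWellEnergy (β lam f x : ℝ) : ℝ :=
  (1 / 2) * β * (x ^ 2 / 2 - lam) ^ 2 - f * x

def doubleWellDual (β lam f ς : ℝ) : ℝ :=
  -(f ^ 2) / (2 * ς) - ς ^ 2 / (2 * β) - lam * ς

end

/- With `f = ςx` and `ς = βq`, `q = x²/2 - λ`, both sides reduce to `½βq² - ςx²`; the degenerate
cases `β = 0` or `q = 0` hold because then `ς = f = 0` and division by zero gives `0`. -/
theorem doubleWellEnergy_eq_doubleWellDual {β lam f x ς : ℝ}
    (hς : ς = β * (x ^ 2 / 2 - lam)) (hf : f = ς * x) :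
    doubleWellEnergy β lam f x = doubleWellDual β lam f ς := by
  subst hς hf
  unfold doubleWellEnergy doubleWellDual
  rcases eq_or_ne β 0 with hβ | hβ
  · simp [hβ]
  rcases eq_or_ne (x ^ 2 / 2 - lam) 0 with hq | hq
  · simp [hq]
  field_simp
  ring

theorem stmt_16_general (β lam f xBar : ℝ) (hf : f ≠ 0)
    (hcrit : β * (xBar ^ 2 / 2 - lam) * xBar = f) :
    xBar ≠ 0 ∧
    β * (xBar ^ 2 / 2 - lam) = f / xBar ∧
    (1 / 2) * β * (xBar ^ 2 / 2 - lam) ^ 2 - f * xBar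
      = -(f ^ 2) / (2 * (β * (xBar ^ 2 / 2 - lam)))
        - (β * (xBar ^ 2 / 2 - lam)) ^ 2 / (2 * β)
        - lam * (β * (xBar ^ 2 / 2 - lam)) := by
  have hx : xBar ≠ 0 := right_ne_zero_of_mul (hcrit ▸ hf)
  exact ⟨hx, eq_div_of_mul_eq hx hcrit, doubleWellEnergy_eq_doubleWellDual rfl hcrit.symm⟩

/-- Complementary-dual equality for the double-well problem: if `x̄` is a
critical point of `Π(x) = ½β(x²/2-λ)² - fx` with `f ≠ 0`, then `x̄ ≠ 0` and,
with `ς̄ = β(x̄²/2-λ)`, one has `ς̄ = f/x̄` and `Π(x̄) = Π^d(ς̄)` where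
`Π^d(ς) = -f²/(2ς) - ς²/(2β) - λς`. -/
theorem stmt_16 (β lam f xBar : ℝ) (hβ : 0 < β) (hlam : 0 < lam) (hf : f ≠ 0)
    (hcrit : β * (xBar ^ 2 / 2 - lam) * xBar = f) :
    xBar ≠ 0 ∧
    β * (xBar ^ 2 / 2 - lam) = f / xBar ∧
    (1 / 2) * β * (xBar ^ 2 / 2 - lam) ^ 2 - f * xBar
      = -(f ^ 2) / (2 * (β * (xBar ^ 2 / 2 - lam)))
        - (β * (xBar ^ 2 / 2 - lam)) ^ 2 / (2 * β)
        - lam * (β * (xBar ^ 2 / 2 - lam)) :=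
  stmt_16_general β lam f xBar hf hcrit
end

section
/- For β > 0, λ > 0 and f ≠ 0, the dual algebraic equation (β⁻¹ς + λ)ς² = f²/2 has exactly one solution ς₁ > 0, and the corresponding x₁ = f/ς₁ is the global minimizer of Π(x) = (1/2)β(x²/2 - λ)² - f x over ℝ. -/
/-!
Canonical duality. Writing `ε = x²/2 - λ` for the strain, Fenchel–Young for the quadratic
`½βε²` gives `Π(x) ≥ Ξ(x, ς)` for every `ς` (`potential` and `totalComplementary` below), with
equality exactly when `ς = βε`. For `ς > 0` the function `Ξ(·, ς)` is a convex quadratic minimized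
at `f/ς`, and the dual equation says precisely that `ς₁ = β((f/ς₁)²/2 - λ)`.
Hence `Π(x₁) = Ξ(x₁, ς₁) ≤ Ξ(x, ς₁) ≤ Π(x)`.
-/

open Set Filter

namespace CanonicalDuality

variable (β lam f : ℝ)

noncomputable def dualMap (ς : ℝ) : ℝ := (β⁻¹ * ς + lam) * ς ^ 2

noncomputable def potential (x : ℝ) : ℝ := 1 / 2 * β * (x ^ 2 / 2 - lam) ^ 2 - f * x

noncomputable def totalComplementary (x ς : ℝ) : ℝ :=
  (x ^ 2 / 2 - lam) * ς - ς ^ 2 / (2 * β) - f * x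

variable {β lam f}

theorem strictMonoOn_dualMap (hβ : 0 < β) (hlam : 0 ≤ lam) :
    StrictMonoOn (dualMap β lam) (Ici 0) := by
  intro a (ha : 0 ≤ a) b _ hab
  have hb : 0 < b := ha.trans_lt hab
  have factor : dualMap β lam b - dualMap β lam a
      = (b - a) * (β⁻¹ * (a ^ 2 + a * b + b ^ 2) + lam * (a + b)) := by
    unfold dualMap; ring
  rw [← sub_pos, factor]
  exact mul_pos (sub_pos.mpr hab) (by positivity)

theorem tendsto_dualMap_atTop (hβ : 0 < β) : Tendsto (dualMap β lam) atTop atTop :=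
  (tendsto_atTop_add_const_right _ lam
    (tendsto_id.const_mul_atTop (inv_pos.mpr hβ))).atTop_mul_atTop₀ (tendsto_pow_atTop two_ne_zero)

theorem existsUnique_pos_dualMap_eq (hβ : 0 < β) (hlam : 0 ≤ lam) {c : ℝ} (hc : 0 < c) :
    ∃! ς : ℝ, 0 < ς ∧ dualMap β lam ς = c := by
  have hcont : ContinuousOn (dualMap β lam) (Ici 0) := by unfold dualMap; fun_prop
  have hzero : dualMap β lam 0 = 0 := by simp [dualMap]
  obtain ⟨ς, hς, hςc⟩ :=
    intermediate_value_Ici hcont (tendsto_dualMap_atTop hβ)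
      (show dualMap β lam 0 ≤ c by linarith)
  have hςpos : 0 < ς := lt_of_le_of_ne hς fun h => by simp [← h, hzero] at hςc; linarith
  refine ⟨ς, ⟨hςpos, hςc⟩, fun τ ⟨hτ, hτc⟩ => ?_⟩
  exact (strictMonoOn_dualMap hβ hlam).injOn (mem_Ici.mpr hτ.le) hς (hτc.trans hςc.symm)

theorem potential_sub_totalComplementary (hβ : β ≠ 0) (x ς : ℝ) :
    potential β lam f x - totalComplementary β lam f x ς
      = (β * (x ^ 2 / 2 - lam) - ς) ^ 2 / (2 * β) := by
  unfold potential totalComplementary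
  field_simp
  ring

theorem totalComplementary_le_potential (hβ : 0 < β) (x ς : ℝ) :
    totalComplementary β lam f x ς ≤ potential β lam f x := by
  have h := potential_sub_totalComplementary (lam := lam) (f := f) hβ.ne' x ς
  have : 0 ≤ (β * (x ^ 2 / 2 - lam) - ς) ^ 2 / (2 * β) := by positivity
  linarith

theorem totalComplementary_div_le {ς : ℝ} (hς : 0 < ς) (x : ℝ) :
    totalComplementary β lam f (f / ς) ς ≤ totalComplementary β lam f x ς := by
  have h : totalComplementary β lam f x ς - totalComplementary β lam f (f / ς) ς
      = ς / 2 * (x - f / ς) ^ 2 := by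
    unfold totalComplementary
    field_simp
    ring
  have : 0 ≤ ς / 2 * (x - f / ς) ^ 2 := by positivity
  linarith

theorem eq_mul_strain_of_dualMap_eq (hβ : β ≠ 0) {ς : ℝ} (hς : ς ≠ 0)
    (h : dualMap β lam ς = f ^ 2 / 2) : ς = β * ((f / ς) ^ 2 / 2 - lam) := by
  unfold dualMap at h
  field_simp at h ⊢
  linear_combination h

theorem potential_eq_totalComplementary_of_dualMap_eq (hβ : β ≠ 0) {ς : ℝ} (hς : ς ≠ 0)
    (h : dualMap β lam ς = f ^ 2 / 2) :
    potential β lam f (f / ς) = totalComplementary β lam f (f / ς) ς := by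
  have hdiff := potential_sub_totalComplementary (lam := lam) (f := f) hβ (f / ς) ς
  rw [← eq_mul_strain_of_dualMap_eq hβ hς h, sub_self, sq, zero_mul, zero_div] at hdiff
  exact sub_eq_zero.mp hdiff

end CanonicalDuality

open CanonicalDuality in
/-- For `β, λ > 0` and `f ≠ 0`, the dual algebraic equation
`(β⁻¹ς + λ)ς² = f²/2` has exactly one positive solution `ς₁ > 0`, and
`x₁ = f/ς₁` is the global minimizer of `Π(x) = ½β(x²/2-λ)² - fx`. -/
theorem stmt_17 (β lam f : ℝ) (hβ : 0 < β) (hlam : 0 < lam) (hf : f ≠ 0) :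
    (∃! ς : ℝ, 0 < ς ∧ (β⁻¹ * ς + lam) * ς ^ 2 = f ^ 2 / 2) ∧
    ∀ ς : ℝ, 0 < ς → (β⁻¹ * ς + lam) * ς ^ 2 = f ^ 2 / 2 →
      ∀ x : ℝ, (1 / 2) * β * ((f / ς) ^ 2 / 2 - lam) ^ 2 - f * (f / ς)
        ≤ (1 / 2) * β * (x ^ 2 / 2 - lam) ^ 2 - f * x := by
  refine ⟨existsUnique_pos_dualMap_eq hβ hlam.le (by positivity), fun ς hς hdual x => ?_⟩
  calc potential β lam f (f / ς)
      = totalComplementary β lam f (f / ς) ς :=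
        potential_eq_totalComplementary_of_dualMap_eq hβ.ne' hς.ne' hdual
    _ ≤ totalComplementary β lam f x ς := totalComplementary_div_le hς x
    _ ≤ potential β lam f x := totalComplementary_le_potential hβ x ς
end
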